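/- Let S be an ordered feasible schedule in which jobs j_1,…,j_k (k > 1) execute consecutively on a shared processor M_r, each j_ℓ in a single interval whose right endpoint is f_{j_ℓ}(S) and where the start of j_ℓ equals f_{j_{ℓ−1}}(S) for ℓ ≥ 2. Let i ∈ {2,…,k} be such that f_{j_ℓ}(S) = c_{j_ℓ} for every ℓ ∈ {i,…,k}, and let 0 < ε ≤ (length of the shared interval of j_{i−1}). Define S' by: S' agrees with S on M_r before time (start of j_i) − ε; the shared completion of j_{i−1} becomes f_{j_{i−1}}(S) − ε and its private completion becomes c_{j_{i−1}} + ε; for each ℓ = i,…,k in increasing order, the shared interval of j_ℓ starts at the new shared completion of j_{ℓ−1}, its shared completion becomes f_{j_ℓ}(S) − ε/2^{ℓ−i+1} and its private completion becomes c_{j_ℓ} − ε/2^{ℓ−i+1}; S' coincides with S on all other processors. Then S' is a feasible schedule and Ω(S') = Ω(S) − ε·w_{j_{i−1}} + ε·Σ_{ℓ=i}^{k} w_{j_ℓ}/2^{ℓ−i+1}. -/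

import Mathlib

/-- A feasible schedule for a shared multi-processor instance: jobs `J` with
processing times `p`, `m` shared processors.  Each job `j` gets a shared
processor `mu j`, a finite set `iv j` of pairwise disjoint open bounded
subintervals of `(0,∞)` (represented by their endpoint pairs) on which `j`
executes on processor `mu j`, and a private completion time `c j ≥ 0` so that
`j` executes on its private processor exactly in `(0, c j)`.  The private time
plus the total length of the shared intervals equals `p j`, and intervals of
distinct jobs on a common shared processor are disjoint. -/
structure Schedule (J : Type) [Fintype J] [DecidableEq J] (m : ℕ) (p : J → ℝ) where
  mu : J → Fin m
  iv : J → Finset (ℝ × ℝ)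
  c : J → ℝ
  c_nonneg : ∀ j, 0 ≤ c j
  iv_valid : ∀ j, ∀ q ∈ iv j, 0 ≤ q.1 ∧ q.1 ≤ q.2
  iv_disjoint : ∀ j, ∀ q ∈ iv j, ∀ q' ∈ iv j, q ≠ q' → q.2 ≤ q'.1 ∨ q'.2 ≤ q.1
  total : ∀ j, c j + ∑ q ∈ iv j, (q.2 - q.1) = p j
  shared_disjoint : ∀ j j', j ≠ j' → mu j = mu j' →
    ∀ q ∈ iv j, ∀ q' ∈ iv j', q.2 ≤ q'.1 ∨ q'.2 ≤ q.1

namespace Schedule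

variable {J : Type} [Fintype J] [DecidableEq J] {m : ℕ} {p : J → ℝ}

/-- The overlap `t_j` of job `j`: total length of `(0, c j) ∩ ⋃ (iv j)`. -/
noncomputable def overlap (S : Schedule J m p) (j : J) : ℝ :=
  ∑ q ∈ S.iv j, max 0 (min (S.c j) q.2 - q.1)

/-- Total weighted overlap `Ω(S) = Σ_j w_j t_j`. -/
noncomputable def Omega (S : Schedule J m p) (w : J → ℝ) : ℝ :=
  ∑ j, w j * S.overlap j

/-- Completion time of `j` on its shared processor: the supremum of right
endpoints of its shared intervals, `0` if there are none. -/
noncomputable def ftime (S : Schedule J m p) (j : J) : ℝ :=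
  WithBot.unbotD 0 ((S.iv j).image Prod.snd).max

/-- A schedule is normal if every job completes on the shared processor no
later than on its private processor. -/
def Normal (S : Schedule J m p) : Prop := ∀ j, S.ftime j ≤ S.c j

/-- A schedule is optimal if it maximizes the total weighted overlap. -/
def Optimal (S : Schedule J m p) (w : J → ℝ) : Prop :=
  ∀ S' : Schedule J m p, S'.Omega w ≤ S.Omega w

end Schedule

/-- A schedule is non-preemptive if each job uses at most one shared interval. -/
def Schedule.NonPreemptive {J : Type} [Fintype J] [DecidableEq J] {m : ℕ} {p : J → ℝ}
    (S : Schedule J m p) : Prop :=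
  ∀ j, (S.iv j).card ≤ 1

/-- A schedule is ordered if it is normal, non-preemptive, and for any two jobs
on the same shared processor the order of shared completion times agrees with
the order of private completion times. -/
def Schedule.Ordered {J : Type} [Fintype J] [DecidableEq J] {m : ℕ} {p : J → ℝ}
    (S : Schedule J m p) : Prop :=
  S.Normal ∧ S.NonPreemptive ∧
    ∀ j j', S.mu j = S.mu j' → (S.ftime j ≤ S.ftime j' ↔ S.c j ≤ S.c j')

/-!
Pulling moves the boundary in front of job `js ℓ` to the left by `ε` for `ℓ = i` and by
`ε / 2 ^ (ℓ - i)` for `ℓ > i`, leaving the earlier boundaries in place; each job keeps its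
processing time by shifting its private completion time by the change of its interval. The
intervals remain consecutive, so the schedule stays feasible, and since both schedules are
normal the overlap of every job is `p j - c j`. Hence `Ω` changes by `Σ w j (c j - c' j)`,
which is `-ε` on `js (i-1)` and `+ε / 2 ^ (ℓ - i + 1)` on `js ℓ` for `ℓ ≥ i`.
-/

open Finset

/-- The leftward shift of the start of the `n`-th job of a block when pulling job `i` by `ε`. -/
noncomputable def pullShift (i : ℕ) (ε : ℝ) (n : ℕ) : ℝ :=
  if n < i then 0 else ε / 2 ^ (n - i)

section PullShift

variable {i n : ℕ} {ε : ℝ}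

theorem pullShift_of_lt (h : n < i) : pullShift i ε n = 0 := if_pos h

theorem pullShift_of_le (h : i ≤ n) : pullShift i ε n = ε / 2 ^ (n - i) := if_neg (not_lt.2 h)

theorem pullShift_self : pullShift i ε i = ε := by
  simp [pullShift_of_le le_rfl]

theorem pullShift_nonneg (hε : 0 ≤ ε) : 0 ≤ pullShift i ε n := by
  unfold pullShift
  split_ifs <;> positivity

theorem pullShift_eq_two_mul_succ (h : i ≤ n) : pullShift i ε n = 2 * pullShift i ε (n + 1) := by
  rw [pullShift_of_le h, pullShift_of_le (h.trans n.le_succ), Nat.succ_sub h, pow_succ]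
  field_simp

theorem sum_mul_pullShift_sub {k : ℕ} (g : ℕ → ℝ) (hi : 1 ≤ i) (hik : i ≤ k) :
    ∑ ℓ ∈ range k, g ℓ * (pullShift i ε ℓ - pullShift i ε (ℓ + 1))
      = ε * ∑ ℓ ∈ Ico i k, g ℓ / 2 ^ (ℓ - i + 1) - ε * g (i - 1) := by
  obtain ⟨t, rfl⟩ : ∃ t, i = t + 1 := ⟨i - 1, by omega⟩
  rw [← sum_range_add_sum_Ico _ hik, sum_range_succ, mul_sum,
    pullShift_of_lt t.lt_succ_self, pullShift_self, Nat.add_sub_cancel]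
  have hbefore : ∑ ℓ ∈ range t, g ℓ * (pullShift (t + 1) ε ℓ - pullShift (t + 1) ε (ℓ + 1)) = 0 :=
    sum_eq_zero fun ℓ hℓ => by
      have := mem_range.1 hℓ
      rw [pullShift_of_lt (by omega), pullShift_of_lt (by omega), sub_self, mul_zero]
  have hafter : ∀ ℓ ∈ Ico (t + 1) k, g ℓ * (pullShift (t + 1) ε ℓ - pullShift (t + 1) ε (ℓ + 1))
      = ε * (g ℓ / 2 ^ (ℓ - (t + 1) + 1)) := fun ℓ hℓ => by
    have hℓ := (mem_Ico.1 hℓ).1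
    rw [pullShift_eq_two_mul_succ hℓ, pullShift_of_le (by omega : t + 1 ≤ ℓ + 1),
      Nat.sub_add_comm hℓ]
    ring
  rw [hbefore, sum_congr rfl hafter]
  ring

end PullShift

noncomputable def blockUpdate {J α : Type} (js : ℕ → J) (k : ℕ) (F : ℕ → α) (G : J → α) :
    J → α :=
  open Classical in fun j => if h : ∃ ℓ < k, j = js ℓ then F h.choose else G j

section BlockUpdate

variable {J α : Type} {js : ℕ → J} {k : ℕ} {F : ℕ → α} {G : J → α}

theorem blockUpdate_induction {P : J → α → Prop} (hF : ∀ ℓ < k, P (js ℓ) (F ℓ))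
    (hG : ∀ j, (∀ ℓ < k, j ≠ js ℓ) → P j (G j)) (j : J) : P j (blockUpdate js k F G j) := by
  unfold blockUpdate
  split_ifs with h
  · obtain ⟨hlt, hj⟩ := h.choose_spec
    generalize h.choose = ℓ at hlt hj ⊢
    subst hj
    exact hF ℓ hlt
  · push Not at h
    exact hG j h

theorem blockUpdate_cases (js : ℕ → J) (k : ℕ) (F : ℕ → α) (G : J → α) (j : J) :
    (∃ ℓ < k, j = js ℓ ∧ blockUpdate js k F G j = F ℓ) ∨
      ((∀ ℓ < k, j ≠ js ℓ) ∧ blockUpdate js k F G j = G j) :=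
  blockUpdate_induction
    (P := fun j v => (∃ ℓ < k, j = js ℓ ∧ v = F ℓ) ∨ ((∀ ℓ < k, j ≠ js ℓ) ∧ v = G j))
    (fun ℓ hℓ => .inl ⟨ℓ, hℓ, rfl, rfl⟩) (fun _ h => .inr ⟨h, rfl⟩) j

theorem blockUpdate_apply_of_lt (hinj : Set.InjOn js (Set.Iio k)) {ℓ : ℕ} (hℓ : ℓ < k) :
    blockUpdate js k F G (js ℓ) = F ℓ :=
  blockUpdate_induction (P := fun j v => j = js ℓ → v = F ℓ)
    (fun _ hℓ' h => by rw [hinj hℓ' hℓ h]) (fun _ h h' => absurd h' (h ℓ hℓ)) _ rfl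

theorem blockUpdate_apply_of_forall_ne {j : J} (hj : ∀ ℓ < k, j ≠ js ℓ) :
    blockUpdate js k F G j = G j :=
  blockUpdate_induction (P := fun j v => (∀ ℓ < k, j ≠ js ℓ) → v = G j)
    (fun ℓ hℓ h => absurd rfl (h ℓ hℓ)) (fun _ _ _ => rfl) _ hj

end BlockUpdate

theorem Finset.sum_univ_eq_sum_range_of_injOn {J M : Type} [Fintype J] [AddCommMonoid M]
    {js : ℕ → J} {k : ℕ} (hinj : Set.InjOn js (Set.Iio k)) {g : J → M}
    (hg : ∀ j, (∀ ℓ < k, j ≠ js ℓ) → g j = 0) :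
    ∑ j, g j = ∑ ℓ ∈ range k, g (js ℓ) := by
  exact (sum_of_injOn js (by simpa [Set.InjOn] using hinj) (fun _ _ => mem_coe.2 (mem_univ _))
    (fun j _ hj => hg j fun ℓ hℓ h => hj ⟨ℓ, by simpa using hℓ, h.symm⟩) fun _ _ => rfl).symm

namespace Schedule

variable {J : Type} [Fintype J] [DecidableEq J] {m : ℕ} {p : J → ℝ}

theorem le_ftime (S : Schedule J m p) {j : J} {q : ℝ × ℝ} (hq : q ∈ S.iv j) :
    q.2 ≤ S.ftime j := by
  have hne : ((S.iv j).image Prod.snd).Nonempty := ⟨q.2, mem_image_of_mem _ hq⟩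
  rw [ftime, ← coe_max' hne, WithBot.unbotD_coe]
  exact le_max' _ _ (mem_image_of_mem _ hq)

theorem ftime_eq_of_iv_eq_singleton (S : Schedule J m p) {j : J} {x y : ℝ}
    (h : S.iv j = {(x, y)}) : S.ftime j = y := by
  simp [ftime, h]

theorem overlap_eq_of_ftime_le (S : Schedule J m p) {j : J} (hj : S.ftime j ≤ S.c j) :
    S.overlap j = p j - S.c j := by
  rw [overlap, ← S.total j, add_sub_cancel_left]
  refine sum_congr rfl fun q hq => ?_
  have hvalid := S.iv_valid j q hq
  have hq2 := S.le_ftime hq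
  rw [min_eq_right (by linarith), max_eq_right (by linarith)]

theorem Omega_eq_of_normal {S S' : Schedule J m p} (hS : S.Normal) (hS' : S'.Normal)
    (w : J → ℝ) : S'.Omega w = S.Omega w + ∑ j, w j * (S.c j - S'.c j) := by
  simp only [Omega, overlap_eq_of_ftime_le _ (hS _), overlap_eq_of_ftime_le _ (hS' _),
    ← sum_add_distrib]
  exact sum_congr rfl fun j _ => by ring

theorem Normal.of_block {S S' : Schedule J m p} (hS : S.Normal) {k : ℕ} {js : ℕ → J}
    (hrest : ∀ j, (∀ ℓ < k, j ≠ js ℓ) → S'.iv j = S.iv j ∧ S'.c j = S.c j)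
    (hblock : ∀ ℓ < k, S'.ftime (js ℓ) ≤ S'.c (js ℓ)) : S'.Normal := by
  intro j
  by_cases hj : ∃ ℓ < k, j = js ℓ
  · obtain ⟨ℓ, hℓ, rfl⟩ := hj
    exact hblock ℓ hℓ
  · push Not at hj
    obtain ⟨hiv, hc⟩ := hrest j hj
    rw [ftime, hiv, hc]
    exact hS j

theorem iv_eq_empty_of_forall_ne (S : Schedule J m p) {r : Fin m} {k : ℕ} {js : ℕ → J}
    (honly : ∀ j, S.mu j = r → S.iv j ≠ ∅ → ∃ ℓ < k, j = js ℓ) {j : J} (hr : S.mu j = r)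
    (hj : ∀ ℓ < k, j ≠ js ℓ) : S.iv j = ∅ := by
  by_contra h
  obtain ⟨ℓ, hℓ, e⟩ := honly j hr h
  exact hj ℓ hℓ e

theorem shared_disjoint_blockUpdate (S : Schedule J m p) {r : Fin m} {k : ℕ} {js : ℕ → J}
    (hmu : ∀ ℓ < k, S.mu (js ℓ) = r)
    (honly : ∀ j, S.mu j = r → S.iv j ≠ ∅ → ∃ ℓ < k, j = js ℓ)
    {x y : ℕ → ℝ} (hsep : ∀ ℓ ℓ', ℓ < ℓ' → ℓ' < k → y ℓ ≤ x ℓ')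
    {j j' : J} (hne : j ≠ j') (hjj' : S.mu j = S.mu j') :
    ∀ q ∈ blockUpdate js k (fun ℓ => {(x ℓ, y ℓ)}) S.iv j,
      ∀ q' ∈ blockUpdate js k (fun ℓ => {(x ℓ, y ℓ)}) S.iv j', q.2 ≤ q'.1 ∨ q'.2 ≤ q.1 := by
  intro q hq q' hq'
  rcases blockUpdate_cases js k _ S.iv j with ⟨ℓ, hℓ, rfl, hj⟩ | ⟨hj, hBj⟩ <;>
    rcases blockUpdate_cases js k _ S.iv j' with ⟨ℓ', hℓ', rfl, hj'⟩ | ⟨hj', hBj'⟩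
  · rw [hj, mem_singleton] at hq
    rw [hj', mem_singleton] at hq'
    subst hq hq'
    rcases lt_or_gt_of_ne (fun h : ℓ = ℓ' => hne (h ▸ rfl)) with h | h
    · exact Or.inl (hsep ℓ ℓ' h hℓ')
    · exact Or.inr (hsep ℓ' ℓ h hℓ)
  · rw [hBj', S.iv_eq_empty_of_forall_ne honly (hjj' ▸ hmu ℓ hℓ) hj'] at hq'
    exact absurd hq' (notMem_empty q')
  · rw [hBj, S.iv_eq_empty_of_forall_ne honly (hjj' ▸ hmu ℓ' hℓ') hj] at hq
    exact absurd hq (notMem_empty q)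
  · rw [hBj] at hq
    rw [hBj'] at hq'
    exact S.shared_disjoint j j' hne hjj' q hq q' hq'

theorem exists_relayout_block (S : Schedule J m p) {r : Fin m} {k : ℕ} {js : ℕ → J}
    (hinj : Set.InjOn js (Set.Iio k)) (hmu : ∀ ℓ < k, S.mu (js ℓ) = r)
    (honly : ∀ j, S.mu j = r → S.iv j ≠ ∅ → ∃ ℓ < k, j = js ℓ)
    {x y c : ℕ → ℝ} (hx0 : 0 ≤ x 0) (hxy : ∀ ℓ < k, x ℓ ≤ y ℓ)
    (hyx : ∀ ℓ, ℓ + 1 < k → y ℓ = x (ℓ + 1)) (hyc : ∀ ℓ < k, y ℓ ≤ c ℓ)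
    (htot : ∀ ℓ < k, c ℓ + (y ℓ - x ℓ) = p (js ℓ)) :
    ∃ S' : Schedule J m p, S'.mu = S.mu ∧
      (∀ j, (∀ ℓ < k, j ≠ js ℓ) → S'.iv j = S.iv j ∧ S'.c j = S.c j) ∧
      ∀ ℓ < k, S'.iv (js ℓ) = {(x ℓ, y ℓ)} ∧ S'.c (js ℓ) = c ℓ := by
  have hmono : MonotoneOn x (Set.Iio k) :=
    monotoneOn_of_le_succ Set.ordConnected_Iio fun ℓ _ _ hℓ => by
      simp only [Order.succ_eq_add_one, Set.mem_Iio] at hℓ ⊢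
      exact (hxy ℓ (by omega)).trans (hyx ℓ hℓ).le
  have hx : ∀ ℓ < k, 0 ≤ x ℓ := fun ℓ hℓ =>
    hx0.trans (hmono (show 0 < k by omega) hℓ ℓ.zero_le)
  have hsep : ∀ ℓ ℓ', ℓ < ℓ' → ℓ' < k → y ℓ ≤ x ℓ' := fun ℓ ℓ' h hℓ' =>
    (hyx ℓ (by omega)).le.trans (hmono (show ℓ + 1 < k by omega) hℓ' h)
  have htotal : ∀ j, blockUpdate js k c S.c j
      + ∑ q ∈ blockUpdate js k (fun ℓ => {(x ℓ, y ℓ)}) S.iv j, (q.2 - q.1) = p j := fun j => by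
    rcases blockUpdate_cases js k (fun ℓ => {(x ℓ, y ℓ)}) S.iv j with ⟨ℓ, hℓ, rfl, hj⟩ | ⟨hj, hBj⟩
    · rw [hj, sum_singleton, blockUpdate_apply_of_lt hinj hℓ]
      exact htot ℓ hℓ
    · rw [hBj, blockUpdate_apply_of_forall_ne hj]
      exact S.total j
  refine ⟨⟨S.mu, blockUpdate js k (fun ℓ => {(x ℓ, y ℓ)}) S.iv, blockUpdate js k c S.c,
    blockUpdate_induction (fun ℓ hℓ => (hx ℓ hℓ).trans ((hxy ℓ hℓ).trans (hyc ℓ hℓ)))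
      (fun j _ => S.c_nonneg j),
    blockUpdate_induction
      (P := fun _ (v : Finset (ℝ × ℝ)) => ∀ q ∈ v, 0 ≤ q.1 ∧ q.1 ≤ q.2)
      (fun ℓ hℓ q hq => by rw [mem_singleton.1 hq]; exact ⟨hx ℓ hℓ, hxy ℓ hℓ⟩)
      (fun j _ => S.iv_valid j),
    blockUpdate_induction
      (P := fun _ (v : Finset (ℝ × ℝ)) => ∀ q ∈ v, ∀ q' ∈ v, q ≠ q' → q.2 ≤ q'.1 ∨ q'.2 ≤ q.1)
      (fun _ _ q hq q' hq' hne => absurd (by rw [mem_singleton.1 hq, mem_singleton.1 hq']) hne)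
      (fun j _ => S.iv_disjoint j),
    htotal, fun _ _ hne hjj' => S.shared_disjoint_blockUpdate hmu honly hsep hne hjj'⟩,
    rfl, fun j hj => ⟨blockUpdate_apply_of_forall_ne (F := fun ℓ => {(x ℓ, y ℓ)}) hj,
      blockUpdate_apply_of_forall_ne hj⟩,
    fun ℓ hℓ => ⟨blockUpdate_apply_of_lt (F := fun ℓ => {(x ℓ, y ℓ)}) hinj hℓ,
      blockUpdate_apply_of_lt hinj hℓ⟩⟩

theorem exists_pulled (S : Schedule J m p) (hS : S.Normal) {r : Fin m} {k : ℕ} {js : ℕ → J}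
    {a : ℕ → ℝ} (hinj : Set.InjOn js (Set.Iio k)) (hmu : ∀ ℓ < k, S.mu (js ℓ) = r)
    (honly : ∀ j, S.mu j = r → S.iv j ≠ ∅ → ∃ ℓ < k, j = js ℓ)
    (hiv : ∀ ℓ < k, S.iv (js ℓ) = {(a ℓ, S.ftime (js ℓ))})
    (hconsec : ∀ ℓ, ℓ + 1 < k → a (ℓ + 1) = S.ftime (js ℓ))
    {i : ℕ} (hi1 : 1 ≤ i) (hik : i ≤ k)
    (hsync : ∀ ℓ, i ≤ ℓ → ℓ < k → S.ftime (js ℓ) = S.c (js ℓ))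
    {ε : ℝ} (hε : 0 ≤ ε) (hε2 : ε ≤ S.ftime (js (i - 1)) - a (i - 1)) :
    ∃ S' : Schedule J m p, S'.Normal ∧ S'.mu = S.mu ∧
      (∀ j, (∀ ℓ < k, j ≠ js ℓ) → S'.iv j = S.iv j ∧ S'.c j = S.c j) ∧
      ∀ ℓ < k, S'.iv (js ℓ) = {(a ℓ - pullShift i ε ℓ, S.ftime (js ℓ) - pullShift i ε (ℓ + 1))} ∧
        S'.c (js ℓ) = S.c (js ℓ) + pullShift i ε (ℓ + 1) - pullShift i ε ℓ := by
  set D := pullShift i ε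
  have hD : ∀ ℓ, 0 ≤ D ℓ := fun ℓ => pullShift_nonneg hε
  have hfa : ∀ ℓ < k, 0 ≤ a ℓ ∧ a ℓ ≤ S.ftime (js ℓ) := fun ℓ hℓ =>
    S.iv_valid _ _ (by rw [hiv ℓ hℓ]; exact mem_singleton_self _)
  have hlen : ∀ ℓ < k, S.c (js ℓ) + (S.ftime (js ℓ) - a ℓ) = p (js ℓ) := fun ℓ hℓ => by
    simpa [hiv ℓ hℓ] using S.total (js ℓ)
  have hx0 : 0 ≤ a 0 - D 0 := by
    rw [show D 0 = 0 from pullShift_of_lt hi1, sub_zero]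
    exact (hfa 0 (by omega)).1
  have hxy : ∀ ℓ < k, a ℓ - D ℓ ≤ S.ftime (js ℓ) - D (ℓ + 1) := by
    intro ℓ hℓ
    rcases lt_trichotomy (ℓ + 1) i with h | h | h
    · rw [show D ℓ = 0 from pullShift_of_lt (by omega), show D (ℓ + 1) = 0 from pullShift_of_lt h]
      linarith [hfa ℓ hℓ]
    · obtain rfl : i = ℓ + 1 := h.symm
      rw [show D ℓ = 0 from pullShift_of_lt (by omega), show D (ℓ + 1) = ε from pullShift_self]
      rw [Nat.add_sub_cancel] at hε2
      linarith
    · rw [show D ℓ = 2 * D (ℓ + 1) from pullShift_eq_two_mul_succ (by omega)]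
      linarith [hfa ℓ hℓ, hD (ℓ + 1)]
  have hyc : ∀ ℓ < k, S.ftime (js ℓ) - D (ℓ + 1) ≤ S.c (js ℓ) + D (ℓ + 1) - D ℓ := by
    intro ℓ hℓ
    rcases lt_or_ge ℓ i with h | h
    · rw [show D ℓ = 0 from pullShift_of_lt h]
      linarith [hS (js ℓ), hD (ℓ + 1)]
    · rw [show D ℓ = 2 * D (ℓ + 1) from pullShift_eq_two_mul_succ h, hsync ℓ h hℓ]
      linarith
  obtain ⟨S', hmu', hrest, hblock⟩ := S.exists_relayout_block hinj hmu honly hx0 hxy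
    (fun ℓ hℓ => by rw [hconsec ℓ hℓ]) hyc (fun ℓ hℓ => by linarith [hlen ℓ hℓ])
  refine ⟨S', hS.of_block hrest fun ℓ hℓ => ?_, hmu', hrest, hblock⟩
  rw [S'.ftime_eq_of_iv_eq_singleton (hblock ℓ hℓ).1, (hblock ℓ hℓ).2]
  exact hyc ℓ hℓ

end Schedule

theorem pulling_produces_feasible_schedule_general
    {J : Type} [Fintype J] [DecidableEq J] {m : ℕ}
    (p w : J → ℝ)
    (S : Schedule J m p) (hord : S.Ordered)
    (r : Fin m) (k : ℕ)
    (js : ℕ → J) (a : ℕ → ℝ)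
    (hinj : ∀ ℓ < k, ∀ ℓ' < k, js ℓ = js ℓ' → ℓ = ℓ')
    (hmu : ∀ ℓ < k, S.mu (js ℓ) = r)
    (honly : ∀ j, S.mu j = r → S.iv j ≠ ∅ → ∃ ℓ < k, j = js ℓ)
    (hiv : ∀ ℓ < k, S.iv (js ℓ) = {(a ℓ, S.ftime (js ℓ))})
    (hconsec : ∀ ℓ, ℓ + 1 < k → a (ℓ + 1) = S.ftime (js ℓ))
    (i : ℕ) (hi1 : 1 ≤ i) (hik : i < k)
    (hsync : ∀ ℓ, i ≤ ℓ → ℓ < k → S.ftime (js ℓ) = S.c (js ℓ))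
    (ε : ℝ) (hε : 0 < ε) (hε2 : ε ≤ S.ftime (js (i - 1)) - a (i - 1)) :
    ∃ S' : Schedule J m p,
      S'.mu = S.mu ∧
      (∀ j, (∀ ℓ < k, j ≠ js ℓ) → S'.iv j = S.iv j ∧ S'.c j = S.c j) ∧
      (∀ ℓ, ℓ + 1 < i → S'.iv (js ℓ) = S.iv (js ℓ) ∧ S'.c (js ℓ) = S.c (js ℓ)) ∧
      (S'.iv (js (i - 1)) = {(a (i - 1), S.ftime (js (i - 1)) - ε)} ∧
        S'.c (js (i - 1)) = S.c (js (i - 1)) + ε) ∧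
      (∀ ℓ, i ≤ ℓ → ℓ < k →
        S'.iv (js ℓ)
            = {(S'.ftime (js (ℓ - 1)), S.ftime (js ℓ) - ε / 2 ^ (ℓ - i + 1))} ∧
        S'.c (js ℓ) = S.c (js ℓ) - ε / 2 ^ (ℓ - i + 1)) ∧
      S'.Omega w = S.Omega w - ε * w (js (i - 1))
          + ε * ∑ ℓ ∈ Finset.Ico i k, w (js ℓ) / 2 ^ (ℓ - i + 1) := by
  have hinj' : Set.InjOn js (Set.Iio k) := fun ℓ hℓ ℓ' hℓ' => hinj ℓ hℓ ℓ' hℓ'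
  obtain ⟨S', hnorm', hmu', hrest, hblock⟩ :=
    S.exists_pulled hord.1 hinj' hmu honly hiv hconsec hi1 hik.le hsync hε.le hε2
  have hshift : ∀ ℓ, i ≤ ℓ → pullShift i ε (ℓ + 1) = ε / 2 ^ (ℓ - i + 1) := fun ℓ h => by
    rw [pullShift_of_le (by omega), Nat.sub_add_comm h]
  refine ⟨S', hmu', hrest, fun ℓ hℓ => ?_, ?_, fun ℓ hiℓ hℓk => ?_, ?_⟩
  · rw [(hblock ℓ (by omega)).1, (hblock ℓ (by omega)).2, hiv ℓ (by omega),
      pullShift_of_lt (by omega : ℓ < i), pullShift_of_lt hℓ]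
    simp only [sub_zero, add_zero, and_self]
  · rw [(hblock (i - 1) (by omega)).1, (hblock (i - 1) (by omega)).2, Nat.sub_add_cancel hi1,
      pullShift_self, pullShift_of_lt (by omega : i - 1 < i)]
    simp only [sub_zero, and_self]
  · have hprev := S'.ftime_eq_of_iv_eq_singleton (hblock (ℓ - 1) (by omega)).1
    have ha := hconsec (ℓ - 1) (by omega)
    rw [Nat.sub_add_cancel (by omega : 1 ≤ ℓ)] at hprev ha
    rw [(hblock ℓ hℓk).1, (hblock ℓ hℓk).2, hprev, ha, pullShift_eq_two_mul_succ hiℓ, hshift ℓ hiℓ]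
    exact ⟨rfl, by ring⟩
  · have hdiff : ∀ ℓ ∈ range k, w (js ℓ) * (S.c (js ℓ) - S'.c (js ℓ))
        = w (js ℓ) * (pullShift i ε ℓ - pullShift i ε (ℓ + 1)) := fun ℓ hℓ => by
      rw [(hblock ℓ (mem_range.1 hℓ)).2]
      ring
    rw [Schedule.Omega_eq_of_normal hord.1 hnorm',
      sum_univ_eq_sum_range_of_injOn hinj' fun j hj => by rw [(hrest j hj).2, sub_self, mul_zero],
      sum_congr rfl hdiff, sum_mul_pullShift_sub (fun ℓ => w (js ℓ)) hi1 hik.le]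
    ring

/-- **pulling.** Let `S` be an ordered feasible schedule in which
jobs `js 0, …, js (k-1)` (`k > 1`) execute consecutively on the shared
processor `r`, job `js ℓ` in a single interval `(a ℓ, f_{js ℓ}(S))` with
`a (ℓ+1) = f_{js ℓ}(S)`.  Let `i` (`1 ≤ i < k`, so that `js i` is the
(1-indexed) `(i+1)`-st job) be such that `f_{js ℓ}(S) = c_{js ℓ}` for all
`ℓ ∈ {i, …, k-1}`, and let `0 < ε ≤` length of the shared interval of
`js (i-1)`.  Then pulling of `js i` by `ε` yields a feasible schedule `S'`
(described by the listed interval data) with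
`Ω(S') = Ω(S) - ε·w (js (i-1)) + ε·Σ_{ℓ=i}^{k-1} w (js ℓ) / 2^(ℓ-i+1)`. -/
theorem pulling_produces_feasible_schedule
    {J : Type} [Fintype J] [DecidableEq J] {m : ℕ} (hm : 1 ≤ m)
    (p w : J → ℝ) (hp : ∀ j, 0 < p j) (hw : ∀ j, 0 < w j)
    (S : Schedule J m p) (hord : S.Ordered)
    (r : Fin m) (k : ℕ) (hk : 2 ≤ k)
    (js : ℕ → J) (a : ℕ → ℝ)
    (hinj : ∀ ℓ < k, ∀ ℓ' < k, js ℓ = js ℓ' → ℓ = ℓ')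
    (hmu : ∀ ℓ < k, S.mu (js ℓ) = r)
    (honly : ∀ j, S.mu j = r → S.iv j ≠ ∅ → ∃ ℓ < k, j = js ℓ)
    (hiv : ∀ ℓ < k, S.iv (js ℓ) = {(a ℓ, S.ftime (js ℓ))})
    (hconsec : ∀ ℓ, ℓ + 1 < k → a (ℓ + 1) = S.ftime (js ℓ))
    (i : ℕ) (hi1 : 1 ≤ i) (hik : i < k)
    (hsync : ∀ ℓ, i ≤ ℓ → ℓ < k → S.ftime (js ℓ) = S.c (js ℓ))
    (ε : ℝ) (hε : 0 < ε) (hε2 : ε ≤ S.ftime (js (i - 1)) - a (i - 1)) :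
    ∃ S' : Schedule J m p,
      S'.mu = S.mu ∧
      (∀ j, (∀ ℓ < k, j ≠ js ℓ) → S'.iv j = S.iv j ∧ S'.c j = S.c j) ∧
      (∀ ℓ, ℓ + 1 < i → S'.iv (js ℓ) = S.iv (js ℓ) ∧ S'.c (js ℓ) = S.c (js ℓ)) ∧
      (S'.iv (js (i - 1)) = {(a (i - 1), S.ftime (js (i - 1)) - ε)} ∧
        S'.c (js (i - 1)) = S.c (js (i - 1)) + ε) ∧
      (∀ ℓ, i ≤ ℓ → ℓ < k →
        S'.iv (js ℓ)
            = {(S'.ftime (js (ℓ - 1)), S.ftime (js ℓ) - ε / 2 ^ (ℓ - i + 1))} ∧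
        S'.c (js ℓ) = S.c (js ℓ) - ε / 2 ^ (ℓ - i + 1)) ∧
      S'.Omega w = S.Omega w - ε * w (js (i - 1))
          + ε * ∑ ℓ ∈ Finset.Ico i k, w (js ℓ) / 2 ^ (ℓ - i + 1) :=
  pulling_produces_feasible_schedule_general p w S hord r k js a hinj hmu honly hiv hconsec i hi1
    hik hsync ε hε hε2
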